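/- For finite multisets X, Y of items over a strictly ranked ground set: there exists an additive DD utility function u consistent with the ranking with u(Y) ≥ u(X) if and only if at least one of the following holds: (i) |Y| > |X|; (ii) for some k ∈ {1,…,|Y|}, the total level of the k best items of Y strictly exceeds the total level of the k best items of X; or (iii) Lev(Y) ≥ Lev(X) (total Borda levels). -/

import Mathlib

variable {α : Type*} [Fintype α] [LinearOrder α]

/-- Borda level: the best item has level `Fintype.card α`, the worst has level 1. -/
def lev (x : α) : ℕ := (Finset.univ.filter (· ≤ x)).card

/-- Total Borda level of a multiset. -/
def levSum (X : Multiset α) : ℕ := (X.map lev).sum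

/-- Sum of levels of the `k` best (highest-ranked) items of `X`. -/
def topLevSum (X : Multiset α) (k : ℕ) : ℕ := (((X.map lev).sort (· ≥ ·)).take k).sum

/-- Sum of levels of the `k` worst (lowest-ranked) items of `X`. -/
def botLevSum (X : Multiset α) (k : ℕ) : ℕ := (((X.map lev).sort (· ≤ ·)).take k).sum

/-- Additive extension of `u` to multisets. -/
def msum (u : α → ℝ) (X : Multiset α) : ℝ := (X.map u).sum

/-- `u` is consistent with the ranking: `u x > u y` iff `x ≻ y`. -/
def Consistent (u : α → ℝ) : Prop := ∀ x y : α, u x > u y ↔ y < x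

/-- Diminishing differences: for items with consecutive levels `x3 ≻ x2 ≻ x1`,
`u x3 - u x2 ≥ u x2 - u x1`. -/
def DD (u : α → ℝ) : Prop :=
  ∀ x1 x2 x3 : α, lev x3 = lev x2 + 1 → lev x2 = lev x1 + 1 → u x2 - u x1 ≤ u x3 - u x2

/-- Increasing differences: for items with consecutive levels `x3 ≻ x2 ≻ x1`,
`u x3 - u x2 ≤ u x2 - u x1`. -/
def ID (u : α → ℝ) : Prop :=
  ∀ x1 x2 x3 : α, lev x3 = lev x2 + 1 → lev x2 = lev x1 + 1 → u x3 - u x2 ≤ u x2 - u x1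


lemma one_le_lev (x : α) : 1 ≤ lev x := by
  rw [Nat.one_le_iff_ne_zero, lev, Ne, Finset.card_eq_zero, ← Ne, ← Finset.nonempty_iff_ne_empty]
  exact ⟨x, by simp⟩

lemma lev_le_card (x : α) : lev x ≤ Fintype.card α := by
  classical
  exact (Finset.card_filter_le _ _)

lemma lev_strictMono : StrictMono (lev : α → ℕ) := by
  intro x y h
  apply Finset.card_lt_card
  constructor
  · intro z hz
    simp only [Finset.mem_filter, Finset.mem_univ, true_and] at hz ⊢
    exact hz.trans h.le
  · intro hsub
    have := hsub (by simp : y ∈ Finset.univ.filter (· ≤ y))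
    simp only [Finset.mem_filter, Finset.mem_univ, true_and] at this
    exact absurd this (not_le.mpr h)

lemma lev_lt_lev_iff {x y : α} : lev x < lev y ↔ x < y := lev_strictMono.lt_iff_lt

lemma lev_inj : Function.Injective (lev : α → ℕ) := lev_strictMono.injective

lemma lev_surj {n : ℕ} (h1 : 1 ≤ n) (h2 : n ≤ Fintype.card α) : ∃ x : α, lev x = n := by
  classical
  have himg : (Finset.univ.image (lev : α → ℕ)) = Finset.Icc 1 (Fintype.card α) := by
    apply Finset.eq_of_subset_of_card_le
    · intro m hm
      simp only [Finset.mem_image] at hm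
      obtain ⟨x, _, rfl⟩ := hm
      simp [Finset.mem_Icc, one_le_lev, lev_le_card]
    · rw [Finset.card_image_of_injective _ lev_inj, Nat.card_Icc]
      simp
  have : n ∈ Finset.univ.image (lev : α → ℕ) := by
    rw [himg]; simp [Finset.mem_Icc]; omega
  simpa using this

lemma Lsum_le (c : ℕ) : ∀ l : List ℕ, l.sum ≤ (l.map (· - c)).sum + l.length * c := by
  intro l
  induction l with
  | nil => simp
  | cons a t ih =>
    simp only [List.sum_cons, List.map_cons, List.length_cons]
    rw [Nat.add_mul, one_mul]
    omega

lemma Lsum_eq (c : ℕ) : ∀ l : List ℕ, (∀ a ∈ l, c ≤ a) → (l.map (· - c)).sum + l.length * c = l.sum := by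
  intro l
  induction l with
  | nil => simp
  | cons a t ih =>
    intro h
    have ha := h a (by simp)
    have := ih (fun b hb => h b (by simp [hb]))
    simp only [List.sum_cons, List.map_cons, List.length_cons]
    rw [Nat.add_mul, one_mul]
    omega

lemma Lsum_zero (c : ℕ) (l : List ℕ) (h : ∀ a ∈ l, a ≤ c) : (l.map (· - c)).sum = 0 := by
  apply List.sum_eq_zero
  intro x hx
  simp only [List.mem_map] at hx
  obtain ⟨a, ha, rfl⟩ := hx
  have := h a ha
  omega

lemma take_sum_le (c k : ℕ) (l : List ℕ) (hk : k ≤ l.length) :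
    (l.take k).sum ≤ (l.map (· - c)).sum + k * c := by
  have h1 : (l.take k).sum ≤ ((l.take k).map (· - c)).sum + (l.take k).length * c := Lsum_le c _
  have h2 : (l.take k).length = k := by simp [List.length_take]; omega
  rw [h2] at h1
  have h3 : ((l.take k).map (· - c)).sum ≤ (l.map (· - c)).sum := by
    conv_rhs => rw [← List.take_append_drop k l]
    rw [List.map_append, List.sum_append]
    omega
  omega

lemma sorted_sum_eq (c : ℕ) : ∀ l : List ℕ, l.Pairwise (· ≥ ·) →
    (l.map (· - c)).sum + (l.countP (fun a => c < a)) * c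
      = (l.take (l.countP (fun a => c < a))).sum := by
  intro l
  induction l with
  | nil => simp
  | cons a t ih =>
    intro hs
    rw [List.pairwise_cons] at hs
    obtain ⟨hall, hts⟩ := hs
    by_cases hca : c < a
    · have hcount : (a :: t).countP (fun a => c < a) = t.countP (fun a => c < a) + 1 := by
        rw [List.countP_cons]; simp [hca]
      rw [hcount, List.take_succ_cons]
      have := ih hts
      simp only [List.map_cons, List.sum_cons]
      rw [Nat.add_mul, one_mul]
      omega
    · have h0 : t.countP (fun a => c < a) = 0 := by
        rw [List.countP_eq_zero]
        intro b hb
        have := hall b hb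
        simp only [decide_eq_true_eq]
        omega
      have hcount : (a :: t).countP (fun a => c < a) = 0 := by
        rw [List.countP_cons]; simp [hca, h0]
      rw [hcount]
      simp only [List.take_zero, List.sum_nil, Nat.zero_mul, Nat.add_zero]
      apply Lsum_zero
      intro b hb
      rcases List.mem_cons.mp hb with rfl | hb
      · omega
      · have := hall b hb; omega

lemma sorted_sum_le_take (k c : ℕ) (l : List ℕ) (hs : l.Pairwise (· ≥ ·)) (hk1 : 1 ≤ k)
    (hkl : k ≤ l.length) (hkl' : k - 1 < l.length) (hc : c = l[k-1]'hkl') :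
    (l.map (· - c)).sum + k * c ≤ (l.take k).sum := by
  have hpw := List.pairwise_iff_getElem.mp hs
  have htake : ∀ a ∈ l.take k, c ≤ a := by
    intro a ha
    obtain ⟨i, hi, rfl⟩ := List.mem_iff_getElem.mp ha
    rw [List.getElem_take]
    have hi' : i < k := by simp [List.length_take] at hi; omega
    rcases Nat.lt_or_ge i (k-1) with h | h
    · exact hc ▸ hpw i (k-1) (by omega) (by omega) h
    · have : i = k - 1 := by omega
      subst this; exact le_of_eq hc
  have hdrop : ∀ a ∈ l.drop k, a ≤ c := by
    intro a ha
    obtain ⟨i, hi, rfl⟩ := List.mem_iff_getElem.mp ha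
    rw [List.getElem_drop]
    have hi' : i < l.length - k := by simp [List.length_drop] at hi; omega
    exact hc ▸ hpw (k-1) (k+i) (by omega) (by omega) (by omega)
  have heq : ((l.take k).map (· - c)).sum + (l.take k).length * c = (l.take k).sum :=
    Lsum_eq c _ htake
  have hlen : (l.take k).length = k := by simp [List.length_take]; omega
  rw [hlen] at heq
  have hzero : ((l.drop k).map (· - c)).sum = 0 := Lsum_zero c _ hdrop
  have hsplit : (l.map (· - c)).sum = ((l.take k).map (· - c)).sum + ((l.drop k).map (· - c)).sum := by
    conv_lhs => rw [← List.take_append_drop k l]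
    rw [List.map_append, List.sum_append]
  omega

def GG(Z : Multiset α) (c : ℕ) : ℕ := (Z.map (fun z => lev z - c)).sum

lemma GG_eq_list (Z : Multiset α) (c : ℕ) :
    GG Z c = (((Z.map lev).sort (· ≥ ·)).map (· - c)).sum := by
  have : (Z.map (fun z => lev z - c)) = (Z.map lev).map (· - c) := by
    rw [Multiset.map_map]; rfl
  rw [GG, this, ← Multiset.sort_eq (Z.map lev) (· ≥ ·), Multiset.map_coe, Multiset.sum_coe,
    Multiset.sort_eq]

lemma GG_zero (Z : Multiset α) : GG Z 0 = levSum Z := by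
  simp [GG, levSum]

-- swap: multiset sum of finset sums
lemma msum_swap {β : Type*} (Z : Multiset α) (s : Finset β) (f : β → α → ℝ) :
    (Z.map (fun z => ∑ i ∈ s, f i z)).sum = ∑ i ∈ s, (Z.map (f i)).sum := by
  induction Z using Multiset.induction_on with
  | empty => simp
  | cons a Z ih => simp [ih, Finset.sum_add_distrib]

lemma cast_GG (Z : Multiset α) (c : ℕ) :
    ((GG Z c : ℕ) : ℝ) = (Z.map (fun z => ((lev z - c : ℕ) : ℝ))).sum := by
  rw [GG, Nat.cast_multiset_sum, Multiset.map_map]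
  rfl

lemma cast_levSum (Z : Multiset α) :
    ((levSum Z : ℕ) : ℝ) = (Z.map (fun z => ((lev z : ℕ) : ℝ))).sum := by
  rw [levSum, Nat.cast_multiset_sum, Multiset.map_map]
  rfl

lemma sum_const_mul (Z : Multiset α) (d : ℝ) :
    (Z.map (fun _ => d)).sum = (Multiset.card Z : ℝ) * d := by
  induction Z using Multiset.induction_on with
  | empty => simp
  | cons a Z ih => simp [ih]; ring

lemma bridge1 (X Y : Multiset α) (hmn : Multiset.card Y ≤ Multiset.card X)
    (hk : ∀ k, 1 ≤ k → k ≤ Multiset.card Y → topLevSum Y k ≤ topLevSum X k)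
    (c : ℕ) : GG Y c ≤ GG X c := by
  set ly := ((Y.map lev).sort (· ≥ ·)) with hly
  set k := ly.countP (fun a => c < a) with hkdef
  have hsY : ly.Pairwise (· ≥ ·) := Multiset.pairwise_sort _ _
  have hklen : k ≤ ly.length := by rw [hkdef]; exact List.countP_le_length
  have hlenY : ly.length = Multiset.card Y := by
    rw [hly, Multiset.length_sort, Multiset.card_map]
  have hYeq : GG Y c + k * c = topLevSum Y k := by
    rw [GG_eq_list, topLevSum, ← hly, hkdef]
    exact sorted_sum_eq c ly hsY
  rcases Nat.eq_zero_or_pos k with hk0 | hkpos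
  · have : GG Y c = 0 := by
      have := hYeq
      rw [hk0] at this
      simp [topLevSum] at this
      omega
    omega
  · have hkm : k ≤ Multiset.card Y := by omega
    have h1 : topLevSum Y k ≤ topLevSum X k := hk k hkpos hkm
    have h2 : topLevSum X k ≤ GG X c + k * c := by
      rw [GG_eq_list, topLevSum]
      apply take_sum_le
      rw [Multiset.length_sort, Multiset.card_map]
      omega
    omega

-- Bridge 2 (easy direction, case (ii), k ≤ card X)
lemma bridge2 (X Y : Multiset α) (k : ℕ) (hk1 : 1 ≤ k) (hkY : k ≤ Multiset.card Y)
    (hkX : k ≤ Multiset.card X) (hlt : topLevSum X k < topLevSum Y k) :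
    ∃ c, GG X c < GG Y c := by
  set lx := ((X.map lev).sort (· ≥ ·)) with hlx
  have hlenX : lx.length = Multiset.card X := by
    rw [hlx, Multiset.length_sort, Multiset.card_map]
  have hkl' : k - 1 < lx.length := by omega
  refine ⟨lx[k-1]'hkl', ?_⟩
  set c := lx[k-1]'hkl' with hc
  have h1 : GG X c + k * c ≤ topLevSum X k := by
    rw [GG_eq_list, topLevSum, ← hlx]
    have hsX : lx.Pairwise (· ≥ ·) := Multiset.pairwise_sort _ _
    exact sorted_sum_le_take k c lx hsX hk1 (by omega) hkl' hc
  have h2 : topLevSum Y k ≤ GG Y c + k * c := by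
    rw [GG_eq_list, topLevSum]
    apply take_sum_le
    rw [Multiset.length_sort, Multiset.card_map]
    omega
  omega

lemma good (a b d : ℝ) (c : ℕ) (ha : 0 < a) (hb : 0 ≤ b) (hd : 0 ≤ d) :
    (∀ x : α, 0 < d + a * lev x + b * ((lev x - c : ℕ) : ℝ)) ∧
    Consistent (fun x : α => d + a * lev x + b * ((lev x - c : ℕ) : ℝ)) ∧
    DD (fun x : α => d + a * lev x + b * ((lev x - c : ℕ) : ℝ)) := by
  refine ⟨?_, ?_, ?_⟩
  · intro x
    have h1 : (1 : ℝ) ≤ (lev x : ℝ) := by exact_mod_cast one_le_lev x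
    have h2 : (0:ℝ) ≤ ((lev x - c : ℕ) : ℝ) := Nat.cast_nonneg _
    nlinarith
  · intro x y
    constructor
    · intro h
      by_contra hxy
      push_neg at hxy
      have hle : lev x ≤ lev y := by
        rcases lt_or_eq_of_le hxy with h' | h'
        · exact (lev_lt_lev_iff.mpr h').le
        · rw [h']
      have c1 : (lev x : ℝ) ≤ (lev y : ℝ) := by exact_mod_cast hle
      have c2 : ((lev x - c : ℕ) : ℝ) ≤ ((lev y - c : ℕ) : ℝ) := by
        have : lev x - c ≤ lev y - c := by omega
        exact_mod_cast this
      simp only [gt_iff_lt] at h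
      nlinarith
    · intro h
      have hlt : lev y < lev x := lev_lt_lev_iff.mpr h
      have c1 : (lev y : ℝ) < (lev x : ℝ) := by exact_mod_cast hlt
      have c2 : ((lev y - c : ℕ) : ℝ) ≤ ((lev x - c : ℕ) : ℝ) := by
        have : lev y - c ≤ lev x - c := by omega
        exact_mod_cast this
      simp only [gt_iff_lt]
      nlinarith
  · intro x1 x2 x3 h32 h21
    have hn : (lev x1 - c) + (lev x3 - c) ≥ 2 * (lev x2 - c) := by omega
    have hc : ((lev x1 - c : ℕ) : ℝ) + ((lev x3 - c : ℕ) : ℝ) ≥ 2 * ((lev x2 - c : ℕ) : ℝ) := by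
      have := hn
      push_cast [← Nat.cast_add]
      exact_mod_cast hn
    have c32 : (lev x3 : ℝ) = (lev x2 : ℝ) + 1 := by exact_mod_cast h32
    have c21 : (lev x2 : ℝ) = (lev x1 : ℝ) + 1 := by exact_mod_cast h21
    simp only
    nlinarith

lemma msum_good (a b d : ℝ) (c : ℕ) (Z : Multiset α) :
    msum (fun x : α => d + a * lev x + b * ((lev x - c : ℕ) : ℝ)) Z
      = (Multiset.card Z : ℝ) * d + a * (levSum Z : ℝ) + b * (GG Z c : ℝ) := by
  rw [msum]
  have : (Z.map (fun x : α => d + a * (lev x : ℝ) + b * ((lev x - c : ℕ) : ℝ))) =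
      (Z.map (fun x : α => (d + a * (lev x : ℝ)) + b * ((lev x - c : ℕ) : ℝ))) := rfl
  rw [this, Multiset.sum_map_add, Multiset.sum_map_add, Multiset.sum_map_mul_left,
    Multiset.sum_map_mul_left, sum_const_mul, cast_GG, cast_levSum]

lemma eps_facts (X : Multiset α) :
    0 < (1 : ℝ) / (levSum X + 1) ∧ (1 : ℝ) / (levSum X + 1) * (levSum X : ℝ) < 1 := by
  constructor
  · positivity
  · rw [div_mul_eq_mul_div, mul_comm, mul_one, div_lt_one (by positivity)]
    linarith

lemma construct1 (X Y : Multiset α) (h : Multiset.card X < Multiset.card Y) :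
    ∃ u : α → ℝ, (∀ x, 0 < u x) ∧ Consistent u ∧ DD u ∧ msum u X ≤ msum u Y := by
  set ε : ℝ := 1 / (levSum X + 1) with hε
  obtain ⟨hε0, hε1⟩ := eps_facts X
  obtain ⟨hpos, hcons, hdd⟩ := good (α := α) ε 0 1 0 hε0 le_rfl zero_le_one
  refine ⟨_, hpos, hcons, hdd, ?_⟩
  rw [msum_good, msum_good]
  have h1 : (Multiset.card X : ℝ) + 1 ≤ (Multiset.card Y : ℝ) := by exact_mod_cast h
  have h2 : 0 ≤ ε * (levSum Y : ℝ) := by positivity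
  simp only [zero_mul, mul_one, add_zero]
  nlinarith [hε1]

lemma construct3 (X Y : Multiset α) (h : levSum X ≤ levSum Y) :
    ∃ u : α → ℝ, (∀ x, 0 < u x) ∧ Consistent u ∧ DD u ∧ msum u X ≤ msum u Y := by
  obtain ⟨hpos, hcons, hdd⟩ := good (α := α) 1 0 0 0 one_pos le_rfl le_rfl
  refine ⟨_, hpos, hcons, hdd, ?_⟩
  rw [msum_good, msum_good]
  have : (levSum X : ℝ) ≤ (levSum Y : ℝ) := by exact_mod_cast h
  simp only [zero_mul, mul_zero, one_mul, add_zero, zero_add]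
  linarith

lemma construct2 (X Y : Multiset α) (c : ℕ) (h : GG X c < GG Y c) :
    ∃ u : α → ℝ, (∀ x, 0 < u x) ∧ Consistent u ∧ DD u ∧ msum u X ≤ msum u Y := by
  set ε : ℝ := 1 / (levSum X + 1) with hε
  obtain ⟨hε0, hε1⟩ := eps_facts X
  obtain ⟨hpos, hcons, hdd⟩ := good (α := α) ε 1 0 c hε0 zero_le_one le_rfl
  refine ⟨_, hpos, hcons, hdd, ?_⟩
  rw [msum_good, msum_good]
  have h1 : (GG X c : ℝ) + 1 ≤ (GG Y c : ℝ) := by exact_mod_cast h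
  have h2 : 0 ≤ ε * (levSum Y : ℝ) := by positivity
  simp only [mul_zero, one_mul, zero_add]
  nlinarith [hε1]

lemma GG_one_add_card (Z : Multiset α) : GG Z 1 + Multiset.card Z = levSum Z := by
  induction Z using Multiset.induction_on with
  | empty => simp [GG, levSum]
  | cons a Z ih =>
    simp only [GG, levSum, Multiset.map_cons, Multiset.sum_cons, Multiset.card_cons] at *
    have := one_le_lev a
    omega

lemma levSum_eq_card (h : Fintype.card α ≤ 1) (Z : Multiset α) :
    levSum Z = Multiset.card Z := by
  induction Z using Multiset.induction_on with
  | empty => simp [levSum]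
  | cons a Z ih =>
    simp only [levSum, Multiset.map_cons, Multiset.sum_cons, Multiset.card_cons] at *
    have h1 := one_le_lev a
    have h2 := lev_le_card a
    omega

lemma hard (X Y : Multiset α) (u : α → ℝ) (hpos : ∀ x, 0 < u x) (hcons : Consistent u)
    (hdd : DD u) (hmn : Multiset.card Y ≤ Multiset.card X)
    (hk : ∀ k, 1 ≤ k → k ≤ Multiset.card Y → topLevSum Y k ≤ topLevSum X k)
    (hlev : levSum Y < levSum X) : msum u Y < msum u X := by
  classical
  set M := Fintype.card α with hM
  -- α is nonempty
  have hX0 : X ≠ 0 := by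
    intro h
    rw [h] at hlev
    simp [levSum] at hlev
  obtain ⟨x0, hx0⟩ := Multiset.exists_mem_of_ne_zero hX0
  have hne : Nonempty α := ⟨x0⟩
  have hM1 : 1 ≤ M := Fintype.card_pos
  -- build the level-indexed items
  have he' : ∀ n : ℕ, ∃ x : α, lev x = min n (M-1) + 1 := by
    intro n
    apply lev_surj (by omega)
    have : min n (M-1) ≤ M - 1 := min_le_right _ _
    omega
  choose e' hlev_e' using he'
  set w : ℕ → ℝ := fun n => u (e' n) with hw
  set D : ℕ → ℝ := fun c => w (c+1) - w c with hD
  set E : ℕ → ℝ := fun l => D (l+1) - D l with hE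
  have hwlev : ∀ z : α, w (lev z - 1) = u z := by
    intro z
    have h1 := one_le_lev z
    have h2 := lev_le_card z
    have : lev (e' (lev z - 1)) = lev z := by
      rw [hlev_e']
      omega
    rw [hw]
    simp only
    rw [lev_inj this]
  have hDnn : ∀ c, 0 ≤ D c := by
    intro c
    rcases Nat.lt_or_ge c (M-1) with h | h
    · have hlt : lev (e' c) < lev (e' (c+1)) := by
        rw [hlev_e', hlev_e']
        omega
      have := (hcons (e' (c+1)) (e' c)).mpr (lev_lt_lev_iff.mp hlt)
      simp only [hD, hw]
      linarith
    · have heq : lev (e' c) = lev (e' (c+1)) := by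
        rw [hlev_e', hlev_e']
        omega
      simp only [hD, hw, lev_inj heq]
      linarith [le_refl (u (e' (c+1)))]
  have hDpos : ∀ c, c + 1 ≤ M - 1 → 0 < D c := by
    intro c hc
    have hlt : lev (e' c) < lev (e' (c+1)) := by
      rw [hlev_e', hlev_e']
      omega
    have := (hcons (e' (c+1)) (e' c)).mpr (lev_lt_lev_iff.mp hlt)
    simp only [hD, hw]
    linarith
  have hEnn : ∀ l, l + 2 ≤ M - 1 → 0 ≤ E l := by
    intro l hl
    have h1 : lev (e' (l+1)) = lev (e' l) + 1 := by rw [hlev_e', hlev_e']; omega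
    have h2 : lev (e' (l+2)) = lev (e' (l+1)) + 1 := by rw [hlev_e', hlev_e']; omega
    have := hdd (e' l) (e' (l+1)) (e' (l+2)) h2 h1
    simp only [hE, hD, hw]
    linarith
  -- key identity
  have key : ∀ s : ℕ, s < M →
      w s = w 0 + D 0 * (s : ℝ) + ∑ l ∈ Finset.range (M-2), E l * ((s - (l+1) : ℕ) : ℝ) := by
    intro s
    induction s with
    | zero =>
      intro _
      have : ∀ l ∈ Finset.range (M-2), E l * ((0 - (l+1) : ℕ) : ℝ) = 0 := by
        intro l _
        simp
      rw [Finset.sum_congr rfl this]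
      simp
    | succ s ih =>
      intro hs
      have hsM : s < M := by omega
      have hws : w (s+1) = w s + D s := by simp only [hD]; ring
      have hterm : ∀ l ∈ Finset.range (M-2),
          E l * ((s + 1 - (l+1) : ℕ) : ℝ)
            = E l * ((s - (l+1) : ℕ) : ℝ) + (if l < s then E l else 0) := by
        intro l hl
        by_cases hls : l < s
        · have hn : s + 1 - (l+1) = (s - (l+1)) + 1 := by omega
          rw [hn]
          push_cast
          simp [hls]
          ring
        · have h1 : s + 1 - (l+1) = 0 := by omega
          have h2 : s - (l+1) = 0 := by omega
          rw [h1, h2]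
          simp [hls]
      have hfilter : (Finset.range (M-2)).filter (fun l => l < s) = Finset.range s := by
        ext l
        simp only [Finset.mem_filter, Finset.mem_range]
        omega
      have htel : ∑ l ∈ Finset.range s, E l = D s - D 0 := by
        simp only [hE]
        exact Finset.sum_range_sub D s
      rw [hws, ih hsM, Finset.sum_congr rfl hterm, Finset.sum_add_distrib,
        ← Finset.sum_filter, hfilter, htel]
      push_cast
      ring
  -- decomposition
  have hdecomp : ∀ Z : Multiset α, msum u Z
      = (Multiset.card Z : ℝ) * w 0 + D 0 * ((GG Z 1 : ℕ) : ℝ)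
        + ∑ l ∈ Finset.range (M-2), E l * ((GG Z (l+2) : ℕ) : ℝ) := by
    intro Z
    have helt : ∀ z ∈ Z, u z = w 0 + D 0 * ((lev z - 1 : ℕ) : ℝ)
        + ∑ l ∈ Finset.range (M-2), E l * ((lev z - (l+2) : ℕ) : ℝ) := by
      intro z _
      have h1 := one_le_lev z
      have h2 := lev_le_card z
      have hkey := key (lev z - 1) (by omega)
      rw [hwlev z] at hkey
      have hsub : ∀ l : ℕ, lev z - 1 - (l+1) = lev z - (l+2) := by intro l; omega
      calc u z = w 0 + D 0 * ((lev z - 1 : ℕ) : ℝ)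
            + ∑ l ∈ Finset.range (M-2), E l * ((lev z - 1 - (l+1) : ℕ) : ℝ) := hkey
        _ = _ := by
            congr 1
            apply Finset.sum_congr rfl
            intro l _
            rw [hsub l]
    rw [msum, Multiset.map_congr rfl helt]
    have hsplit : (Z.map (fun z => w 0 + D 0 * ((lev z - 1 : ℕ) : ℝ)
        + ∑ l ∈ Finset.range (M-2), E l * ((lev z - (l+2) : ℕ) : ℝ))).sum
        = (Z.map (fun _ => w 0)).sum + (Z.map (fun z => D 0 * ((lev z - 1 : ℕ) : ℝ))).sum
          + (Z.map (fun z => ∑ l ∈ Finset.range (M-2), E l * ((lev z - (l+2) : ℕ) : ℝ))).sum := by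
      rw [← Multiset.sum_map_add, ← Multiset.sum_map_add]
    rw [hsplit, sum_const_mul, Multiset.sum_map_mul_left, ← cast_GG,
      msum_swap Z (Finset.range (M-2)) (fun l z => E l * ((lev z - (l+2) : ℕ) : ℝ))]
    congr 1
    apply Finset.sum_congr rfl
    intro l _
    rw [Multiset.sum_map_mul_left, ← cast_GG]
  -- final computation
  have hG : ∀ c, GG Y c ≤ GG X c := bridge1 X Y hmn hk
  have hsumnn : 0 ≤ ∑ l ∈ Finset.range (M-2),
      E l * ((GG X (l+2) : ℕ) : ℝ) - ∑ l ∈ Finset.range (M-2), E l * ((GG Y (l+2) : ℕ) : ℝ) := by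
    rw [← Finset.sum_sub_distrib]
    apply Finset.sum_nonneg
    intro l hl
    rw [Finset.mem_range] at hl
    have hEl : 0 ≤ E l := hEnn l (by omega)
    have : ((GG Y (l+2) : ℕ) : ℝ) ≤ ((GG X (l+2) : ℕ) : ℝ) := by exact_mod_cast hG (l+2)
    nlinarith
  rw [hdecomp X, hdecomp Y]
  have hw0 : 0 < w 0 := hpos _
  have hD0 : 0 ≤ D 0 := hDnn 0
  rcases lt_or_eq_of_le hmn with hlt | heq
  · have hcard : (Multiset.card Y : ℝ) + 1 ≤ (Multiset.card X : ℝ) := by exact_mod_cast hlt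
    have hG1 : ((GG Y 1 : ℕ) : ℝ) ≤ ((GG X 1 : ℕ) : ℝ) := by exact_mod_cast hG 1
    nlinarith
  · have hM2 : 2 ≤ M := by
      by_contra hM2
      push_neg at hM2
      have h1 := levSum_eq_card (by omega) X
      have h2 := levSum_eq_card (by omega) Y
      omega
    have hD0pos : 0 < D 0 := hDpos 0 (by omega)
    have hG1 : GG Y 1 < GG X 1 := by
      have e1 := GG_one_add_card X
      have e2 := GG_one_add_card Y
      omega
    have hG1' : ((GG Y 1 : ℕ) : ℝ) + 1 ≤ ((GG X 1 : ℕ) : ℝ) := by exact_mod_cast hG1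
    have hcard : (Multiset.card Y : ℝ) = (Multiset.card X : ℝ) := by exact_mod_cast heq
    nlinarith

/-- characterization of the PDD relation: there exists a positive additive
DD utility consistent with the ranking with u(Y) ≥ u(X) iff |Y| > |X|, or for some
k ∈ {1,…,|Y|} the total level of the k best items of Y strictly exceeds that of the k best
items of X, or Lev(Y) ≥ Lev(X). -/
theorem stmt4 (X Y : Multiset α) :
    (∃ u : α → ℝ, (∀ x, 0 < u x) ∧ Consistent u ∧ DD u ∧ msum u X ≤ msum u Y) ↔
      (Multiset.card X < Multiset.card Y ∨
       (∃ k, 1 ≤ k ∧ k ≤ Multiset.card Y ∧ topLevSum X k < topLevSum Y k) ∨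
       levSum X ≤ levSum Y) := by
  constructor
  · rintro ⟨u, hpos, hcons, hdd, hXY⟩
    by_contra hR
    push_neg at hR
    obtain ⟨h1, h2, h3⟩ := hR
    have h2' : ∀ k, 1 ≤ k → k ≤ Multiset.card Y → topLevSum Y k ≤ topLevSum X k := by
      intro k hk1 hk2
      exact h2 k hk1 hk2
    have := hard X Y u hpos hcons hdd h1 h2' h3
    linarith
  · rintro (h | ⟨k, hk1, hkY, hlt⟩ | h)
    · exact construct1 X Y h
    · by_cases hkX : k ≤ Multiset.card X
      · obtain ⟨c, hc⟩ := bridge2 X Y k hk1 hkY hkX hlt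
        exact construct2 X Y c hc
      · exact construct1 X Y (by omega)
    · exact construct3 X Y h
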